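/- The MFM call price satisfies the terminal condition: for every fixed S>0, C(t,S) → max(S−K, 0) as t → T⁻. -/

import Mathlib

open MeasureTheory ProbabilityTheory Real Filter

/-! With `τ = T - t`, the Poisson weights `e^{-λ'τ} (λ'τ)^n / n!` concentrate on `n = 0` as
`τ → 0⁺`, while every bracket is bounded by `S + K e^{-rτ}` because `0 ≤ Φ ≤ 1`; by dominated
convergence for series only the `n = 0` term survives. That term is a Black–Scholes price with
volatility `σ̂`, whose `d₁` and `d₂` are `(log (S / K) + O(τ)) / (σ̂ √τ)`: they tend to `±∞` with
the sign of `log (S / K)`, or to `0` at the money, where `S - K = 0`. -/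

/-- The standard normal cumulative distribution function `Φ`. -/
noncomputable def stdNormalCDF (x : ℝ) : ℝ :=
  ((ProbabilityTheory.gaussianReal 0 1) (Set.Iic x)).toReal

open scoped Topology Nat

lemma stdNormalCDF_eq_cdf (x : ℝ) : stdNormalCDF x = cdf (gaussianReal 0 1) x :=
  (cdf_eq_real _ x).symm

lemma stdNormalCDF_nonneg (x : ℝ) : 0 ≤ stdNormalCDF x := ENNReal.toReal_nonneg

lemma stdNormalCDF_le_one (x : ℝ) : stdNormalCDF x ≤ 1 :=
  stdNormalCDF_eq_cdf x ▸ cdf_le_one _ x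

lemma tendsto_stdNormalCDF_atTop : Tendsto stdNormalCDF atTop (𝓝 1) := by
  simpa only [funext stdNormalCDF_eq_cdf] using tendsto_cdf_atTop (gaussianReal 0 1)

lemma tendsto_stdNormalCDF_atBot : Tendsto stdNormalCDF atBot (𝓝 0) := by
  simpa only [funext stdNormalCDF_eq_cdf] using tendsto_cdf_atBot (gaussianReal 0 1)

lemma stdNormalCDF_eq_integral (x : ℝ) :
    stdNormalCDF x = ∫ t in Set.Iic x, gaussianPDFReal 0 1 t := by
  rw [stdNormalCDF, gaussianReal_apply_eq_integral 0 one_ne_zero (Set.Iic x),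
    ENNReal.toReal_ofReal]
  exact setIntegral_nonneg measurableSet_Iic fun t _ ↦ gaussianPDFReal_nonneg _ _ _

lemma continuous_stdNormalCDF : Continuous stdNormalCDF := by
  have hpdf : Integrable (gaussianPDFReal 0 1) := integrable_gaussianPDFReal 0 1
  have hprimitive (x : ℝ) :
      stdNormalCDF x = stdNormalCDF 0 + ∫ t in (0 : ℝ)..x, gaussianPDFReal 0 1 t := by
    rw [stdNormalCDF_eq_integral, stdNormalCDF_eq_integral,
      ← intervalIntegral.integral_Iic_sub_Iic hpdf.integrableOn hpdf.integrableOn]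
    ring
  rw [funext hprimitive]
  exact continuous_const.add (hpdf.continuous_primitive 0)

lemma stdNormalCDF_neg (x : ℝ) : stdNormalCDF (-x) = 1 - stdNormalCDF x := by
  have := nullSingletonClass_gaussianReal (μ := 0) one_ne_zero
  have hsymm : (gaussianReal 0 1).map (fun y ↦ -y) = gaussianReal 0 1 := by
    rw [gaussianReal_map_neg, neg_zero]
  calc stdNormalCDF (-x) = ((gaussianReal 0 1).map (fun y ↦ -y)).real (Set.Iic (-x)) := by
        rw [hsymm]; rfl
    _ = (gaussianReal 0 1).real (Set.Ioi x) := by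
        rw [map_measureReal_apply (by fun_prop) measurableSet_Iic,
          measureReal_congr Ioi_ae_eq_Ici]
        congr 1; ext y; simp
    _ = 1 - stdNormalCDF x := by
        rw [← Set.compl_Iic, probReal_compl_eq_one_sub measurableSet_Iic]; rfl

lemma stdNormalCDF_zero : stdNormalCDF 0 = 1 / 2 := by
  linarith [neg_zero (G := ℝ) ▸ stdNormalCDF_neg 0]

lemma abs_mul_stdNormalCDF_sub_mul_stdNormalCDF_le {a b : ℝ} (ha : 0 ≤ a) (hb : 0 ≤ b)
    (x y : ℝ) : |a * stdNormalCDF x - b * stdNormalCDF y| ≤ a + b := by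
  have hx : a * stdNormalCDF x ∈ Set.Icc 0 a :=
    ⟨mul_nonneg ha (stdNormalCDF_nonneg x), mul_le_of_le_one_right ha (stdNormalCDF_le_one x)⟩
  have hy : b * stdNormalCDF y ∈ Set.Icc 0 b :=
    ⟨mul_nonneg hb (stdNormalCDF_nonneg y), mul_le_of_le_one_right hb (stdNormalCDF_le_one y)⟩
  rw [abs_sub_le_iff]
  constructor <;> linarith [hx.1, hx.2, hy.1, hy.2]

/-- The value at `0` is `Φ 0`, the limit of `Φ (d₁)` at the money. -/
noncomputable def heaviside (x : ℝ) : ℝ := if x < 0 then 0 else if x = 0 then 1 / 2 else 1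

lemma sub_mul_heaviside_log_div {S K : ℝ} (hS : 0 < S) (hK : 0 < K) :
    (S - K) * heaviside (log (S / K)) = max (S - K) 0 := by
  rcases lt_trichotomy S K with hSK | rfl | hSK
  · have hlog : log (S / K) < 0 := log_neg (div_pos hS hK) ((div_lt_one hK).2 hSK)
    simp [heaviside, hlog, hSK.le]
  · simp
  · have hlog : 0 < log (S / K) := log_pos ((one_lt_div hK).2 hSK)
    simp [heaviside, hlog.not_gt, hlog.ne', hSK.le]

lemma tendsto_stdNormalCDF_add_mul_div_sqrt (L a : ℝ) {s : ℝ} (hs : 0 < s) :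
    Tendsto (fun τ ↦ stdNormalCDF ((L + a * τ) / (s * √τ))) (𝓝[>] 0) (𝓝 (heaviside L)) := by
  have hscale : Tendsto (fun τ ↦ s * √τ) (𝓝[>] 0) (𝓝[>] 0) := by
    refine tendsto_nhdsWithin_iff.2 ⟨?_, ?_⟩
    · exact ((continuous_sqrt.const_mul s).tendsto' 0 0 (by simp)).mono_left nhdsWithin_le_nhds
    · filter_upwards [self_mem_nhdsWithin] with τ (hτ : 0 < τ) using mul_pos hs (sqrt_pos.2 hτ)
  have hdrift : Tendsto (fun τ ↦ a / s * √τ) (𝓝[>] 0) (𝓝 0) :=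
    ((continuous_sqrt.const_mul _).tendsto' 0 0 (by simp)).mono_left nhdsWithin_le_nhds
  have hsplit : (fun τ ↦ L * (s * √τ)⁻¹ + a / s * √τ) =ᶠ[𝓝[>] 0]
      fun τ ↦ (L + a * τ) / (s * √τ) := by
    filter_upwards [self_mem_nhdsWithin] with τ (hτ : 0 < τ)
    have hsqrt : 0 < √τ := sqrt_pos.2 hτ
    field_simp
    rw [sq_sqrt hτ.le, mul_comm]
  have hblowup : Tendsto (fun τ ↦ (s * √τ)⁻¹) (𝓝[>] 0) atTop :=
    tendsto_inv_nhdsGT_zero.comp hscale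
  rcases lt_trichotomy L 0 with hL | rfl | hL
  · have harg : Tendsto (fun τ ↦ (L + a * τ) / (s * √τ)) (𝓝[>] 0) atBot :=
      (tendsto_congr' hsplit).1 (((tendsto_const_mul_atBot_of_neg hL).2 hblowup).atBot_add hdrift)
    rw [show heaviside L = 0 from if_pos hL]
    exact tendsto_stdNormalCDF_atBot.comp harg
  · have harg : Tendsto (fun τ ↦ (0 + a * τ) / (s * √τ)) (𝓝[>] 0) (𝓝 0) :=
      (tendsto_congr' hsplit).1 (by simpa only [zero_mul, zero_add] using hdrift)
    rw [show heaviside 0 = 1 / 2 by simp [heaviside], ← stdNormalCDF_zero]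
    exact continuous_stdNormalCDF.continuousAt.tendsto.comp harg
  · have harg : Tendsto (fun τ ↦ (L + a * τ) / (s * √τ)) (𝓝[>] 0) atTop :=
      (tendsto_congr' hsplit).1 ((hblowup.const_mul_atTop hL).atTop_add hdrift)
    rw [show heaviside L = 1 by simp [heaviside, hL.not_gt, hL.ne']]
    exact tendsto_stdNormalCDF_atTop.comp harg

lemma add_mul_div_mul_sqrt_sub_mul_sqrt (L μ : ℝ) {s τ : ℝ} (hs : 0 < s) (hτ : 0 < τ) :
    (L + (μ + s ^ 2 / 2) * τ) / (s * √τ) - s * √τ = (L + (μ - s ^ 2 / 2) * τ) / (s * √τ) := by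
  have hsqrt : 0 < √τ := sqrt_pos.2 hτ
  field_simp
  rw [sq_sqrt hτ.le]
  ring

lemma tendsto_blackScholesCall_payoff {S K s : ℝ} (hS : 0 < S) (hK : 0 < K) (hs : 0 < s)
    (μ r : ℝ) :
    Tendsto (fun τ ↦ S * stdNormalCDF ((log (S / K) + (μ + s ^ 2 / 2) * τ) / (s * √τ))
      - K * exp (-r * τ)
        * stdNormalCDF ((log (S / K) + (μ + s ^ 2 / 2) * τ) / (s * √τ) - s * √τ))
      (𝓝[>] 0) (𝓝 (max (S - K) 0)) := by
  have hdiscount : Tendsto (fun τ ↦ exp (-r * τ)) (𝓝[>] 0) (𝓝 1) :=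
    ((continuous_const.mul continuous_id).rexp.tendsto' 0 1 (by simp)).mono_left
      nhdsWithin_le_nhds
  have hd₂ : Tendsto (fun τ ↦ stdNormalCDF ((log (S / K) + (μ + s ^ 2 / 2) * τ) / (s * √τ)
      - s * √τ)) (𝓝[>] 0) (𝓝 (heaviside (log (S / K)))) := by
    refine (tendsto_stdNormalCDF_add_mul_div_sqrt (log (S / K)) (μ - s ^ 2 / 2) hs).congr' ?_
    filter_upwards [self_mem_nhdsWithin] with τ (hτ : 0 < τ)
    rw [add_mul_div_mul_sqrt_sub_mul_sqrt _ _ hs hτ]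
  have hprice :=
    ((tendsto_stdNormalCDF_add_mul_div_sqrt (log (S / K)) (μ + s ^ 2 / 2) hs).const_mul S).sub
      ((hdiscount.const_mul K).mul hd₂)
  rw [← sub_mul_heaviside_log_div hS hK]
  convert hprice using 2
  ring

lemma tendsto_const_sub_nhdsLT (T : ℝ) : Tendsto (fun t ↦ T - t) (𝓝[<] T) (𝓝[>] 0) := by
  refine tendsto_nhdsWithin_iff.2 ⟨?_, ?_⟩
  · exact ((continuous_sub_left T).tendsto' T 0 (sub_self T)).mono_left nhdsWithin_le_nhds
  · filter_upwards [self_mem_nhdsWithin] with t (ht : t < T) using sub_pos.2 ht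

lemma tendsto_tsum_poisson_mul {α : Type*} {l : Filter α} {m : α → ℝ} (hm : Tendsto m l (𝓝 0))
    {g : ℕ → α → ℝ} {B c : ℝ} (hB : ∀ᶠ x in l, ∀ n, |g n x| ≤ B)
    (hg₀ : Tendsto (g 0) l (𝓝 c)) :
    Tendsto (fun x ↦ ∑' n, exp (-m x) * m x ^ n / n ! * g n x) l (𝓝 c) := by
  have hweight (n : ℕ) :
      Tendsto (fun x ↦ exp (-m x) * m x ^ n / n !) l (𝓝 (exp (-0) * 0 ^ n / n !)) :=
    ((by fun_prop : Continuous fun y : ℝ ↦ exp (-y) * y ^ n / n !).tendsto 0).comp hm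
  have hterm (n : ℕ) : Tendsto (fun x ↦ exp (-m x) * m x ^ n / n ! * g n x) l
      (𝓝 (if n = 0 then c else 0)) := by
    rcases n with _ | n
    · simpa using (hweight 0).mul hg₀
    · have hvanish : Tendsto (fun x ↦ exp (-m x) * m x ^ (n + 1) / (n + 1)!) l (𝓝 0) := by
        simpa using hweight (n + 1)
      refine hvanish.zero_mul_isBoundedUnder_le ⟨B, eventually_map.2 ?_⟩
      filter_upwards [hB] with x hx using hx (n + 1)
  have hsmall : ∀ᶠ x in l, |m x| ≤ 1 := by
    simpa using hm.norm.eventually (eventually_le_nhds (by norm_num : ‖(0 : ℝ)‖ < 1))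
  have hdom : ∀ᶠ x in l, ∀ n,
      ‖exp (-m x) * m x ^ n / n ! * g n x‖ ≤ exp 1 * (1 ^ n / n !) * B := by
    filter_upwards [hB, hsmall] with x hgx hmx n
    have hexp : exp (-m x) ≤ exp 1 := exp_le_exp.2 (by linarith [neg_abs_le (m x)])
    have hpow : |m x| ^ n ≤ 1 ^ n := pow_le_pow_left₀ (abs_nonneg _) hmx n
    calc ‖exp (-m x) * m x ^ n / n ! * g n x‖
        = exp (-m x) * (|m x| ^ n / n !) * |g n x| := by
          rw [Real.norm_eq_abs, abs_mul, abs_div, abs_mul, abs_pow, abs_exp, Nat.abs_cast,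
            mul_div_assoc]
      _ ≤ exp 1 * (1 ^ n / n !) * B := by
          gcongr
          exact hgx n
  simpa using tendsto_tsum_of_dominated_convergence
    (((Real.summable_pow_div_factorial 1).mul_left (exp 1)).mul_right B) hterm hdom

theorem mfm_call_terminal_condition_general
    (S K r T σ σH Hu μJ σJ lam k δt : ℝ)
    (hS : 0 < S) (hK : 0 < K)
    (hσ : 0 < σ) (hk : 0 ≤ k) (hδt : 0 < δt)
    (σhat2 lam' : ℝ)
    (hσhat2 : σhat2 = σ ^ 2 + σH ^ 2 * δt ^ (2 * Hu - 1)
      + k * Real.sqrt ((2 / Real.pi) * (σ ^ 2 / δt + σH ^ 2 * δt ^ (2 * Hu - 2))))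
    (σn rn w d1 d2 : ℕ → ℝ → ℝ)
    (hσn : ∀ n t, t < T → σn n t = Real.sqrt (σhat2 + n * σJ ^ 2 / (T - t)))
    (hrn : ∀ n t, t < T → rn n t = r - lam * (Real.exp (μJ + σJ ^ 2 / 2) - 1)
      + n * (μJ + σJ ^ 2 / 2) / (T - t))
    (hd1 : ∀ n t, t < T → d1 n t = (Real.log (S / K) + rn n t * (T - t)
      + (σn n t) ^ 2 * (T - t) / 2) / (σn n t * Real.sqrt (T - t)))
    (hd2 : ∀ n t, t < T → d2 n t = d1 n t - σn n t * Real.sqrt (T - t))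
    (hw : ∀ n t, t < T →
      w n t = Real.exp (-lam' * (T - t)) * (lam' * (T - t)) ^ n / n.factorial)
    (C : ℝ → ℝ)
    (hC : ∀ t, t < T → C t = ∑' n, w n t
      * (S * stdNormalCDF (d1 n t) - K * Real.exp (-r * (T - t)) * stdNormalCDF (d2 n t))) :
    Tendsto C (nhdsWithin T (Set.Iio T)) (nhds (max (S - K) 0)) := by
  have hs : 0 < √σhat2 := sqrt_pos.2 (by rw [hσhat2]; positivity)
  set s := √σhat2
  set ρ := r - lam * (exp (μJ + σJ ^ 2 / 2) - 1)
  have hσn₀ (t : ℝ) (ht : t < T) : σn 0 t = s := by simp [hσn 0 t ht, s]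
  have hd1₀ (t : ℝ) (ht : t < T) :
      d1 0 t = (log (S / K) + (ρ + s ^ 2 / 2) * (T - t)) / (s * √(T - t)) := by
    rw [hd1 0 t ht, hrn 0 t ht, hσn₀ t ht]
    simp only [CharP.cast_eq_zero, zero_mul, zero_div, add_zero]
    ring
  have hpayoff : Tendsto (fun t ↦ S * stdNormalCDF (d1 0 t)
      - K * exp (-r * (T - t)) * stdNormalCDF (d2 0 t)) (𝓝[<] T) (𝓝 (max (S - K) 0)) := by
    refine ((tendsto_blackScholesCall_payoff hS hK hs ρ r).comp
      (tendsto_const_sub_nhdsLT T)).congr' ?_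
    filter_upwards [self_mem_nhdsWithin] with t (ht : t < T)
    rw [Function.comp_apply, hd2 0 t ht, hσn₀ t ht, hd1₀ t ht]
  have hdiscount : ∀ᶠ t in 𝓝[<] T, exp (-r * (T - t)) ≤ 2 :=
    eventually_nhdsWithin_of_eventually_nhds <|
      ((continuous_const.mul (continuous_sub_left T)).rexp.tendsto' T 1 (by simp)).eventually
        (eventually_le_nhds one_lt_two)
  have hintensity : Tendsto (fun t ↦ lam' * (T - t)) (𝓝[<] T) (𝓝 0) := by
    simpa using ((tendsto_const_sub_nhdsLT T).mono_right nhdsWithin_le_nhds).const_mul lam'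
  refine (tendsto_tsum_poisson_mul (B := S + K * 2) (g := fun n t ↦ S * stdNormalCDF (d1 n t)
    - K * exp (-r * (T - t)) * stdNormalCDF (d2 n t)) hintensity ?_ hpayoff).congr' ?_
  · filter_upwards [hdiscount] with t ht n
    refine (abs_mul_stdNormalCDF_sub_mul_stdNormalCDF_le hS.le (by positivity) _ _).trans ?_
    gcongr
  · filter_upwards [self_mem_nhdsWithin] with t (ht : t < T)
    rw [hC t ht]
    exact tsum_congr fun n ↦ by rw [hw n t ht, neg_mul lam']

/-- Terminal condition for the MFM call price: for every fixed `S > 0`,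
`C(t,S) → max (S - K) 0` as `t → T⁻`. -/
theorem mfm_call_terminal_condition
    (S K r T σ σH Hu μJ σJ lam k δt : ℝ)
    (hS : 0 < S) (hK : 0 < K) (hT : 0 < T)
    (hσ : 0 < σ) (hσH : 0 < σH) (hH1 : 3 / 4 < Hu) (hH2 : Hu < 1)
    (hσJ : 0 < σJ) (hlam : 0 < lam) (hk : 0 ≤ k) (hδt : 0 < δt)
    (σhat2 lam' : ℝ)
    (hσhat2 : σhat2 = σ ^ 2 + σH ^ 2 * δt ^ (2 * Hu - 1)
      + k * Real.sqrt ((2 / Real.pi) * (σ ^ 2 / δt + σH ^ 2 * δt ^ (2 * Hu - 2))))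
    (hlam' : lam' = lam * Real.exp (μJ + σJ ^ 2 / 2))
    (σn rn w d1 d2 : ℕ → ℝ → ℝ)
    (hσn : ∀ n t, t < T → σn n t = Real.sqrt (σhat2 + n * σJ ^ 2 / (T - t)))
    (hrn : ∀ n t, t < T → rn n t = r - lam * (Real.exp (μJ + σJ ^ 2 / 2) - 1)
      + n * (μJ + σJ ^ 2 / 2) / (T - t))
    (hd1 : ∀ n t, t < T → d1 n t = (Real.log (S / K) + rn n t * (T - t)
      + (σn n t) ^ 2 * (T - t) / 2) / (σn n t * Real.sqrt (T - t)))
    (hd2 : ∀ n t, t < T → d2 n t = d1 n t - σn n t * Real.sqrt (T - t))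
    (hw : ∀ n t, t < T →
      w n t = Real.exp (-lam' * (T - t)) * (lam' * (T - t)) ^ n / n.factorial)
    (C : ℝ → ℝ)
    (hC : ∀ t, t < T → C t = ∑' n, w n t
      * (S * stdNormalCDF (d1 n t) - K * Real.exp (-r * (T - t)) * stdNormalCDF (d2 n t))) :
    Tendsto C (nhdsWithin T (Set.Iio T)) (nhds (max (S - K) 0)) :=
  mfm_call_terminal_condition_general S K r T σ σH Hu μJ σJ lam k δt hS hK hσ hk hδt σhat2 lam'
    hσhat2 σn rn w d1 d2 hσn hrn hd1 hd2 hw C hC
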